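/- If there exists an overlap between two perfect paths p and q in a monomial algebra Λ, then the underlying cycles c_p and c_q are equivalent (i.e., each is a subpath of some power of the other, equivalently they agree up to cyclic permutation). -/

import Mathlib

/-! Combinatorial model of a monomial algebra `Λ = KQ/I`.

A finite quiver is given by source and target maps on a type of arrows.
A (nontrivial) path is encoded as a nonempty list of composable arrows;
the admissible monomial ideal `I` is encoded by its set `F` of minimal
generating paths, and a path is zero in `Λ` iff it contains a member of
`F` as a contiguous subpath (infix). -/

/-- A quiver structure on arrow type `E` with vertex type `V`. -/
structure QuiverData (V E : Type) where
  src : E → V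
  tgt : E → V

namespace QuiverData

variable {V E : Type} (Q : QuiverData V E)

/-- `l` is the list of arrows of a path of `Q`. -/
def IsPath (l : List E) : Prop := l.Chain' fun a b => Q.tgt a = Q.src b

/-- Two paths are composable: the target of the first equals the source of
the second (vacuously true if one of them is trivial). -/
def Composable (l m : List E) : Prop :=
  ∀ a ∈ l.getLast?, ∀ b ∈ m.head?, Q.tgt a = Q.src b

end QuiverData

/-- A monomial algebra, encoded combinatorially: a finite quiver together with
the set `F` of minimal paths generating the admissible monomial ideal `I`. -/
structure MonomialData (V E : Type) extends QuiverData V E where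
  F : Set (List E)
  F_path : ∀ f ∈ F, toQuiverData.IsPath f
  F_len : ∀ f ∈ F, 2 ≤ f.length
  F_min : ∀ f ∈ F, ∀ g, g <:+: f → (∃ f' ∈ F, f' <:+: g) → g = f
  admissible : ∃ N, ∀ l, toQuiverData.IsPath l → N ≤ l.length → ∃ f ∈ F, f <:+: l

namespace MonomialData

variable {V E : Type} (M : MonomialData V E)

/-- The path `l` is zero in `Λ`. -/
def IsZero (l : List E) : Prop := ∃ f ∈ M.F, f <:+: l

/-- `l` is a path which is nonzero in `Λ`. -/
def Nonzero (l : List E) : Prop := M.toQuiverData.IsPath l ∧ ¬ M.IsZero l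

/-- A perfect pair of nonzero nontrivial paths, after Chen–Shen–Zhou. -/
def PerfectPair (p q : List E) : Prop :=
  p ≠ [] ∧ q ≠ [] ∧ M.Nonzero p ∧ M.Nonzero q ∧
  M.toQuiverData.Composable p q ∧ M.IsZero (p ++ q) ∧
  (∀ q', q' ≠ [] → M.Nonzero q' → M.toQuiverData.Composable p q' →
      M.IsZero (p ++ q') → q <+: q') ∧
  (∀ p', p' ≠ [] → M.Nonzero p' → M.toQuiverData.Composable p' q →
      M.IsZero (p' ++ q) → p <:+ p')

/-- A perfect path: a path appearing in a perfect path sequence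
`(p₁, …, pₙ, pₙ₊₁ = p₁)`, encoded by a periodic sequence of paths each of
whose consecutive pairs is perfect. -/
def IsPerfect (p : List E) : Prop :=
  ∃ (n : ℕ) (s : ℕ → List E), 0 < n ∧ s 0 = p ∧ (∀ i, s (i + n) = s i) ∧
    ∀ i, M.PerfectPair (s i) (s (i + 1))

/-- `c` is the underlying cycle associated with the perfect path `p`:
the shortest cycle `c` with `p₁ ⋯ pₙ = cˡ` for some `l > 0`, for a perfect
path sequence through `p`. -/
def IsUnderlyingCycleOf (c p : List E) : Prop :=
  ∃ (n : ℕ) (s : ℕ → List E), 0 < n ∧ s 0 = p ∧ (∀ i, s (i + n) = s i) ∧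
    (∀ i, M.PerfectPair (s i) (s (i + 1))) ∧
    (∃ l, 0 < l ∧ ((List.range n).map s).flatten = (List.replicate l c).flatten) ∧
    (∀ c' l', 0 < l' → ((List.range n).map s).flatten = (List.replicate l' c').flatten →
      c.length ≤ c'.length)


/-- There is an overlap between the perfect paths `p` and `q` (`p` overlaps `q`). -/
def Overlap (p q : List E) : Prop :=
  ∃ x p' q' : List E, x ≠ [] ∧ p = p' ++ x ∧ q = x ++ q' ∧
    M.Nonzero (p' ++ x ++ q') ∧ (p = q → p' ≠ [] ∧ q' ≠ [])

/-- An elementary perfect path: a source in the Hasse quiver of the left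
divisibility order `⪯` on perfect paths, i.e. it is not a proper left divisor
of any perfect path. -/
def Elementary (p : List E) : Prop :=
  M.IsPerfect p ∧ ¬ ∃ q, M.IsPerfect q ∧ p <+: q ∧ p ≠ q

/-- A co-elementary perfect path: a sink in the Hasse quiver of `⪯`, i.e.
no proper left divisor of it is perfect. -/
def CoElementary (p : List E) : Prop :=
  M.IsPerfect p ∧ ¬ ∃ q, M.IsPerfect q ∧ q <+: p ∧ q ≠ p

/-- There is an arrow `q ⟶ p` in the Hasse quiver of `(ℙ_Λ, ⪯)`:
`p ≺ q` and no perfect path lies strictly between them. -/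
def HasseArrowPrec (q p : List E) : Prop :=
  M.IsPerfect p ∧ M.IsPerfect q ∧ p <+: q ∧ p ≠ q ∧
    ¬ ∃ r, M.IsPerfect r ∧ p <+: r ∧ p ≠ r ∧ r <+: q ∧ r ≠ q

end MonomialData

/-- Two cycles are equivalent (agree up to cyclic permutation): each is a
subpath of a power of the other. -/
def CyclesEquiv {E : Type} (c d : List E) : Prop :=
  ∃ m k, 0 < m ∧ 0 < k ∧ c <:+: (List.replicate m d).flatten ∧
    d <:+: (List.replicate k c).flatten


/-! If `p = p' x` and `q = x q'` overlap, the overlap propagates along the perfect path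
sequences `(p, p₂, …)` and `(q, q₂, …)`: `q q₂` is a minimal relation, so `q' q₂` is nonzero,
and the minimality in the perfect pair `(p, p₂)` gives `p₂ = q' x₂` and `q₂ = x₂ q''` with `x₂`
nontrivial. Hence `p₁ ⋯ p_K` is a prefix of `p' q₁ ⋯ q_K` for every `K`. As both products are
powers of the underlying cycles `c` and `d`, each of `c`, `d` occurs in a power of the other. -/

namespace List

variable {α : Type*}

theorem prefix_flatten_replicate {l : ℕ} (hl : 0 < l) (c : List α) :
    c <+: (replicate l c).flatten := by
  obtain ⟨l, rfl⟩ := Nat.exists_eq_add_one.mpr hl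
  rw [replicate_succ, flatten_cons]
  exact prefix_append _ _

theorem flatten_replicate_flatten_replicate (k l : ℕ) (c : List α) :
    (replicate k (replicate l c).flatten).flatten = (replicate (k * l) c).flatten := by
  rw [← map_replicate, ← flatten_flatten, flatten_replicate_replicate]

theorem infix_of_append_prefix_append {a b σ w : List α} (h : a ++ b <+: σ ++ w)
    (hσ : σ.length ≤ a.length) : b <:+: w := by
  obtain ⟨r, hr⟩ := h
  obtain ⟨a', rfl⟩ : σ <+: a :=
    prefix_of_prefix_length_le ⟨w, rfl⟩ ⟨b ++ r, by rw [← append_assoc, hr]⟩ hσ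
  have hw : w = a' ++ b ++ r := append_cancel_left (by simpa only [append_assoc] using hr.symm)
  exact ⟨a', r, hw.symm⟩

theorem infix_of_prefix_of_prefix_append {u v σ w : List α} (hu : u <+: w) (hv : v <+: σ ++ w)
    (hlen : σ.length + u.length ≤ v.length) : u <:+: v :=
  have hσu : σ ++ u <+: v :=
    prefix_of_prefix_length_le ((prefix_append_right_inj σ).2 hu) hv (by simpa using hlen)
  (suffix_append σ u).isInfix.trans hσu.isInfix

end List

namespace QuiverData

variable {V E : Type} {Q : QuiverData V E}

theorem composable_of_isPath_append {l m : List E} (h : Q.IsPath (l ++ m)) : Q.Composable l m :=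
  (List.isChain_append.1 h).2.2

theorem composable_append_left_iff {σ x m : List E} (hx : x ≠ []) :
    Q.Composable (σ ++ x) m ↔ Q.Composable x m := by
  simp only [Composable, List.getLast?_append_of_ne_nil σ hx]

theorem composable_append_right_iff {l x τ : List E} (hx : x ≠ []) :
    Q.Composable l (x ++ τ) ↔ Q.Composable l x := by
  simp only [Composable, List.head?_append_of_ne_nil x hx]

end QuiverData

namespace MonomialData

variable {V E : Type} {M : MonomialData V E}

theorem IsZero.mono {l m : List E} (h : M.IsZero l) (hlm : l <:+: m) : M.IsZero m :=
  let ⟨f, hf, hfl⟩ := h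
  ⟨f, hf, hfl.trans hlm⟩

theorem Nonzero.infix {l m : List E} (hm : M.Nonzero m) (hlm : l <:+: m) : M.Nonzero l :=
  ⟨List.IsChain.infix hm.1 hlm, fun hl => hm.2 (hl.mono hlm)⟩

theorem nonzero_of_infix_mem_F {f g : List E} (hf : f ∈ M.F) (hgf : g <:+: f)
    (hlt : g.length < f.length) : M.Nonzero g := by
  refine ⟨List.IsChain.infix (M.F_path f hf) hgf, fun hg => ?_⟩
  rw [M.F_min f hf g hgf hg] at hlt
  exact lt_irrefl _ hlt

/-- The relation witnessing `P Q = 0` cannot lie inside `P` or `Q`, so it straddles the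
junction; the two minimality conditions then stretch it over all of `P` and `Q`. -/
theorem PerfectPair.append_mem_F {P Q : List E} (h : M.PerfectPair P Q) : P ++ Q ∈ M.F := by
  obtain ⟨-, -, hPnz, hQnz, hcomp, ⟨f, hf, hfPQ⟩, hminQ, hminP⟩ := h
  rcases List.infix_append_iff_ne_nil.1 hfPQ with hfP | hfQ | ⟨P₂, Q₁, hP₂, hQ₁, rfl, hP₂P, hQ₁Q⟩
  · exact absurd ⟨f, hf, hfP⟩ hPnz.2
  · exact absurd ⟨f, hf, hfQ⟩ hQnz.2
  obtain ⟨P₁, rfl⟩ := hP₂P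
  obtain ⟨Q₂, rfl⟩ := hQ₁Q
  have hQ : Q₁ ++ Q₂ = Q₁ := by
    refine (List.prefix_append Q₁ Q₂).eq_of_length_le (hminQ Q₁ hQ₁ ?_ ?_ ?_).length_le |>.symm
    · exact hQnz.infix List.infix_append_left
    · exact (QuiverData.composable_append_right_iff hQ₁).1 hcomp
    · exact ⟨_, hf, P₁, [], by simp⟩
  have hP : P₁ ++ P₂ = P₂ := by
    refine (List.suffix_append P₁ P₂).eq_of_length_le (hminP P₂ hP₂ ?_ ?_ ?_).length_le |>.symm
    · exact hPnz.infix List.infix_append_right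
    · exact (QuiverData.composable_append_left_iff (σ := P₁) hP₂).1 hcomp
    · exact ⟨_, hf, [], Q₂, by simp⟩
  rwa [hP, hQ]

variable (M) in
def OverlapAlong (P Q σ S : List E) : Prop :=
  ∃ x, x ≠ [] ∧ P = σ ++ x ∧ Q = x ++ S ∧ M.Nonzero (σ ++ x ++ S)

theorem OverlapAlong.of_perfectPair {P Q A B σ S : List E} (hPA : M.PerfectPair P A)
    (hQB : M.PerfectPair Q B) (h : M.OverlapAlong P Q σ S) : ∃ S', M.OverlapAlong A B S S' := by
  obtain ⟨x, hx, rfl, rfl, hnz⟩ := h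
  obtain ⟨-, -, -, -, -, hPAzero, hminA, -⟩ := hPA
  have hF : x ++ S ++ B ∈ M.F := hQB.append_mem_F
  obtain ⟨-, hB, -⟩ := hQB
  have hSB : M.Nonzero (S ++ B) :=
    nonzero_of_infix_mem_F hF ⟨x, [], by simp⟩ (by simpa using List.length_pos_iff.2 hx)
  have hcomp : M.Composable (σ ++ x) (S ++ B) :=
    (QuiverData.composable_append_left_iff hx).2
      (QuiverData.composable_of_isPath_append (by simpa using M.F_path _ hF))
  have hASB : A <+: S ++ B :=
    hminA (S ++ B) (by simp [hB]) hSB hcomp ⟨_, hF, σ, [], by simp⟩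
  have hAS : ¬ A <+: S := fun ⟨r, hr⟩ =>
    hnz.2 (hPAzero.mono ⟨[], r, by simp [← hr]⟩)
  obtain ⟨x₂, rfl⟩ :=
    (List.prefix_or_prefix_of_prefix hASB (List.prefix_append S B)).resolve_left hAS
  have hx₂ : x₂ ≠ [] := by
    rintro rfl
    exact hAS (by simp)
  obtain ⟨S', rfl⟩ := (List.prefix_append_right_inj S).1 (by simpa using hASB)
  exact ⟨S', x₂, hx₂, rfl, rfl, by simpa using hSB⟩

end MonomialData

def pathProd {E : Type} (s : ℕ → List E) (K : ℕ) : List E := ((List.range K).map s).flatten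

section pathProd

variable {E : Type} {s : ℕ → List E}

@[simp]
theorem pathProd_zero : pathProd s 0 = [] := rfl

theorem pathProd_succ (K : ℕ) : pathProd s (K + 1) = pathProd s K ++ s K := by
  simp [pathProd, List.range_succ]

theorem pathProd_prefix_of_le {K L : ℕ} (h : K ≤ L) : pathProd s K <+: pathProd s L := by
  induction L, h using Nat.le_induction with
  | base => exact List.prefix_refl _
  | succ L _ ih => exact ih.trans (by rw [pathProd_succ]; exact List.prefix_append _ _)

theorem le_length_pathProd (hs : ∀ i, s i ≠ []) (K : ℕ) : K ≤ (pathProd s K).length := by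
  induction K with
  | zero => simp
  | succ K ih =>
    have := List.length_pos_iff.2 (hs K)
    rw [pathProd_succ, List.length_append]
    omega

theorem pathProd_mul {n : ℕ} (hs : Function.Periodic s n) (R : ℕ) :
    pathProd s (n * R) = (List.replicate R (pathProd s n)).flatten := by
  induction R with
  | zero => simp
  | succ R ih =>
    have hshift : (List.range n).map (fun i => s (n * R + i)) = (List.range n).map s :=
      List.map_congr_left fun i _ => by simpa [add_comm, mul_comm] using hs.nat_mul R i
    rw [Nat.mul_succ, pathProd, List.range_add, List.map_append, List.flatten_append, ← pathProd,
      ih, List.map_map, Function.comp_def, hshift, ← pathProd, List.replicate_succ',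
      List.flatten_append, List.flatten_singleton]

theorem pathProd_prefix_flatten_replicate {n l : ℕ} {c : List E} (hn : 0 < n)
    (hs : Function.Periodic s n) (hc : pathProd s n = (List.replicate l c).flatten) (K : ℕ) :
    pathProd s K <+: (List.replicate (K * l) c).flatten := by
  have h := pathProd_prefix_of_le (s := s) (Nat.le_mul_of_pos_left K hn)
  rwa [pathProd_mul hs, hc, List.flatten_replicate_flatten_replicate] at h

end pathProd

namespace MonomialData

variable {V E : Type} {M : MonomialData V E}

theorem pathProd_prefix_of_overlapAlong {s t : ℕ → List E} {σ S : List E}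
    (hs : ∀ i, M.PerfectPair (s i) (s (i + 1))) (ht : ∀ i, M.PerfectPair (t i) (t (i + 1)))
    (h₀ : M.OverlapAlong (s 0) (t 0) σ S) (K : ℕ) : pathProd s K <+: σ ++ pathProd t K := by
  have key : ∀ k, ∃ τ S, M.OverlapAlong (s k) (t k) τ S ∧
      pathProd s (k + 1) ++ S = σ ++ pathProd t (k + 1) := by
    intro k
    induction k with
    | zero =>
      refine ⟨σ, S, h₀, ?_⟩
      obtain ⟨x, -, hs₀, ht₀, -⟩ := h₀
      simp [pathProd_succ, hs₀, ht₀]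
    | succ k ih =>
      obtain ⟨τ, T, hk, hprod⟩ := ih
      obtain ⟨T', hk'⟩ := hk.of_perfectPair (hs k) (ht k)
      refine ⟨T, T', hk', ?_⟩
      obtain ⟨x, -, hsk, htk, -⟩ := hk'
      rw [pathProd_succ (s := s), pathProd_succ (s := t), hsk, htk]
      simp only [← List.append_assoc, hprod]
  cases K with
  | zero => simp
  | succ K =>
    obtain ⟨-, T, -, hprod⟩ := key K
    exact ⟨T, hprod⟩

end MonomialData

theorem overlap_underlyingCycles_equiv_general {V E : Type} (M : MonomialData V E)
    (p q c d : List E)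
    (hov : M.Overlap p q)
    (hc : M.IsUnderlyingCycleOf c p) (hd : M.IsUnderlyingCycleOf d q) :
    CyclesEquiv c d := by
  obtain ⟨n, s, hn, rfl, hsper, hs, ⟨l, hl, hsc⟩, -⟩ := hc
  obtain ⟨n', t, hn', rfl, htper, ht, ⟨l', hl', htd⟩, -⟩ := hd
  obtain ⟨x, σ, S, hx, hsx, htx, hnz, -⟩ := hov
  change pathProd s n = _ at hsc
  change pathProd t n' = _ at htd
  have hst := M.pathProd_prefix_of_overlapAlong hs ht ⟨x, hx, hsx, htx, hnz⟩
  have hσ : σ.length ≤ (pathProd s n).length := by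
    have h := (pathProd_prefix_of_le (s := s) hn).length_le
    simp only [pathProd_succ, pathProd_zero, List.nil_append, hsx, List.length_append] at h
    omega
  have hcd : (List.replicate l c).flatten <:+: pathProd t (n * 2) := by
    have h := hst (n * 2)
    rw [pathProd_mul hsper, hsc] at h
    simp only [List.replicate, List.flatten_cons, List.flatten_nil, List.append_nil] at h
    exact List.infix_of_append_prefix_append h (by rwa [← hsc])
  have hn'_le := le_length_pathProd (fun i => (ht i).1) n'
  have hdc : pathProd t n' <:+: pathProd s (σ.length + (pathProd t n').length) :=
    List.infix_of_prefix_of_prefix_append (pathProd_prefix_of_le (by omega)) (hst _)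
      (le_length_pathProd (fun i => (hs i).1) _)
  refine ⟨n * 2 * l', (σ.length + (pathProd t n').length) * l,
    Nat.mul_pos (by omega) hl', Nat.mul_pos (by omega) hl, ?_, ?_⟩
  · exact (List.prefix_flatten_replicate hl c).isInfix.trans <|
      hcd.trans (pathProd_prefix_flatten_replicate hn' htper htd _).isInfix
  · exact (List.prefix_flatten_replicate hl' d).isInfix.trans <| htd ▸
      hdc.trans (pathProd_prefix_flatten_replicate hn hsper hsc _).isInfix

/-- if two perfect paths overlap then their underlying cycles
are equivalent. -/
theorem overlap_underlyingCycles_equiv {V E : Type} (M : MonomialData V E)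
    (p q c d : List E) (hp : M.IsPerfect p) (hq : M.IsPerfect q)
    (hov : M.Overlap p q)
    (hc : M.IsUnderlyingCycleOf c p) (hd : M.IsUnderlyingCycleOf d q) :
    CyclesEquiv c d :=
  overlap_underlyingCycles_equiv_general M p q c d hov hc hd
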